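/- arXiv:2403.02233 — 2 statements merged into one kernel-verified Lean document; each statement's English description precedes it below -/
import Mathlib

section
/- Under the single-cluster pointwise setting, let p ∈ ℳ lie in area 𝒫_n. Then the feature–position component of the negative loss gradient satisfies e_pᵀ(−∇_Q ℓ(Q))v_n = A_n(Q) · ( z_n³ (1 − A_n(Q))² + Σ_{a≠n} z_a² z_n A_a(Q)² ), where A_m(Q) = Σ_{q∈𝒰∩𝒫_m} s_{p→q}(Q) is the unmasked area attention of patch p to area 𝒫_m. -/
/-!
Single-cluster pointwise setting (shared context for Statements 2–6 of the paper):

`𝒫 = Fin P` is partitioned into areas `𝒫_1, …, 𝒫_N` via `area : Fin P → Fin N`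
(`𝒫_j = area⁻¹ j`); `v_1, …, v_N ∈ ℝ^d` are pairwise orthogonal unit features;
`z_1, …, z_N ∈ ℝ`; the sample has columns `X_q = z_{area q} v_{area q}`; positional
encodings `e_q` are unit vectors, pairwise orthogonal and orthogonal to every feature;
`ℳ ⊂ 𝒫` is the mask set, `𝒰 = 𝒫 ∖ ℳ`; `Y = mask(X)` zeroes masked columns;
`X̃ = Y + E`; `s_{p→q}(Q)` is the softmax attention on `X̃`;
`F_p(Q) = Σ_q s_{p→q}(Q) Y_q`; `ℓ(Q) = (1/2) Σ_{p∈ℳ} ‖F_p(Q) − X_p‖²`;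
`A_m(Q) = Σ_{q ∈ 𝒰 ∩ 𝒫_m} s_{p→q}(Q)` is the unmasked area attention.

The gradient identities `e_pᵀ(−∇_Q ℓ)v` and `e_pᵀ(−∇_Q ℓ)e_q` are expressed via the
Fréchet derivative of `ℓ` paired against the rank-one directions `e_p vᵀ` resp. `e_p e_qᵀ`
(for a matrix `M` one has `aᵀ M b = ⟨M, a bᵀ⟩_F`).
-/

noncomputable section

open Finset

variable {d P N : ℕ}

/-- The sample: patch `q` carries content `z_{area q} · v_{area q}`. -/
def Xcol (area : Fin P → Fin N) (v : Fin N → Fin d → ℝ) (z : Fin N → ℝ) :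
    Fin P → Fin d → ℝ :=
  fun q i => z (area q) * v (area q) i

/-- Masked sample: masked patches are set to the value `0`. -/
def Ycol (M : Finset (Fin P)) (X : Fin P → Fin d → ℝ) : Fin P → Fin d → ℝ :=
  fun q i => if q ∈ M then 0 else X q i

/-- Positional-encoding-augmented input `X̃ = Y + E`. -/
def XtCol (e Y : Fin P → Fin d → ℝ) : Fin P → Fin d → ℝ :=
  fun q i => Y q i + e q i

/-- Softmax attention score `s_{p→q}(Q)` computed on the augmented inputs `X̃`. -/
def attScore (Xt : Fin P → Fin d → ℝ) (Q : Fin d → Fin d → ℝ) (p q : Fin P) : ℝ :=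
  Real.exp (∑ i, ∑ j, Xt p i * Q i j * Xt q j) /
    ∑ r, Real.exp (∑ i, ∑ j, Xt p i * Q i j * Xt r j)

/-- Transformer output at patch `p`: `F_p(Q) = Σ_q s_{p→q}(Q) · Y_q`. -/
def Fout (Xt Y : Fin P → Fin d → ℝ) (Q : Fin d → Fin d → ℝ) (p : Fin P) :
    Fin d → ℝ :=
  fun i => ∑ q, attScore Xt Q p q * Y q i

/-- Per-sample masked reconstruction loss `ℓ(Q) = (1/2) Σ_{p∈ℳ} ‖F_p(Q) − X_p‖²`. -/
def maeLoss (M : Finset (Fin P)) (X Xt Y : Fin P → Fin d → ℝ)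
    (Q : Fin d → Fin d → ℝ) : ℝ :=
  (1 / 2) * ∑ p ∈ M, ∑ i, (Fout Xt Y Q p i - X p i) ^ 2

/-- Unmasked area attention `A_j(Q) = Σ_{q ∈ 𝒰 ∩ 𝒫_j} s_{p→q}(Q)` of patch `p` to area `j`. -/
def areaAttn (area : Fin P → Fin N) (M : Finset (Fin P)) (Xt : Fin P → Fin d → ℝ)
    (Q : Fin d → Fin d → ℝ) (p : Fin P) (j : Fin N) : ℝ :=
  ∑ q ∈ Finset.univ.filter (fun q => q ∉ M ∧ area q = j), attScore Xt Q p q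
/-!
In the direction `e_p v_nᵀ` only the logits of the row of `p` move (the positional encodings are
orthonormal and orthogonal to all features), and they shift by `v_n ⬝ Y_q`, which is `z_n` on
`𝒰 ∩ 𝒫_n` and `0` elsewhere. Hence `F_p` moves by `(v_n ⬝ F_p) (X_p - F_p)` and
`-ℓ'(Q)(e_p v_nᵀ) = (v_n ⬝ F_p) ‖F_p - X_p‖²`. Expanding `F_p = Σ_a z_a A_a v_a` in the
orthonormal features gives `v_n ⬝ F_p = z_n A_n` and
`‖F_p - X_p‖² = z_n² (1 - A_n)² + Σ_{a ≠ n} z_a² A_a²`.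
-/

def logit (x : Fin d → ℝ) (Q : Fin d → Fin d → ℝ) (y : Fin d → ℝ) : ℝ :=
  ∑ i, ∑ j, x i * Q i j * y j

lemma logit_rankOne (x a b y : Fin d → ℝ) :
    logit x (fun i j => a i * b j) y = (x ⬝ᵥ a) * (b ⬝ᵥ y) := by
  simp only [logit, dotProduct, Finset.sum_mul_sum]
  exact sum_congr rfl fun i _ => sum_congr rfl fun j _ => by ring

def logitCLM (x y : Fin d → ℝ) : (Fin d → Fin d → ℝ) →L[ℝ] ℝ :=
  LinearMap.toContinuousLinearMap
    { toFun := fun Q => logit x Q y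
      map_add' := fun Q Q' => by
        simp only [logit, Pi.add_apply, mul_add, add_mul, sum_add_distrib]
      map_smul' := fun c Q => by
        simp only [logit, Pi.smul_apply, smul_eq_mul, RingHom.id_apply, mul_sum]
        exact sum_congr rfl fun i _ => sum_congr rfl fun j _ => by ring }

@[simp]
lemma logitCLM_apply (x y : Fin d → ℝ) (H : Fin d → Fin d → ℝ) :
    logitCLM x y H = logit x H y :=
  rfl

lemma hasFDerivAt_attScore (Xt : Fin P → Fin d → ℝ) (Q : Fin d → Fin d → ℝ) (p q : Fin P) :
    HasFDerivAt (fun Q => attScore Xt Q p q)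
      (attScore Xt Q p q •
        (logitCLM (Xt p) (Xt q) - ∑ r, attScore Xt Q p r • logitCLM (Xt p) (Xt r))) Q := by
  set E : Fin P → (Fin d → Fin d → ℝ) → ℝ := fun r Q => Real.exp (logit (Xt p) Q (Xt r))
  have hE : ∀ r, HasFDerivAt (E r) (E r Q • logitCLM (Xt p) (Xt r)) Q :=
    fun r => (logitCLM (Xt p) (Xt r)).hasFDerivAt.exp
  have hD : HasFDerivAt (fun Q => ∑ r, E r Q) (∑ r, E r Q • logitCLM (Xt p) (Xt r)) Q :=
    HasFDerivAt.fun_sum fun r _ => hE r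
  have hD_pos : 0 < ∑ r, E r Q := sum_pos (fun r _ => Real.exp_pos _) ⟨q, mem_univ q⟩
  have hquot := (hE q).mul ((hasDerivAt_inv hD_pos.ne').comp_hasFDerivAt Q hD)
  refine hquot.congr_fderiv ?_
  ext H
  have hs : ∀ r, attScore Xt Q p r = E r Q / ∑ r', E r' Q := fun r => rfl
  simp only [add_apply, smul_apply, sub_apply, _root_.sum_apply, smul_eq_mul,
    Function.comp_apply, hs, div_mul_eq_mul_div, ← sum_div]
  field_simp
  ring

lemma fderiv_maeLoss_apply (M : Finset (Fin P)) (X Xt Y : Fin P → Fin d → ℝ)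
    (Q H : Fin d → Fin d → ℝ) :
    fderiv ℝ (maeLoss M X Xt Y) Q H = ∑ p ∈ M, (Fout Xt Y Q p - X p) ⬝ᵥ
      ∑ q, (attScore Xt Q p q *
        (logit (Xt p) H (Xt q) - ∑ r, attScore Xt Q p r * logit (Xt p) H (Xt r))) • Y q := by
  set s' := fun p q => attScore Xt Q p q •
    (logitCLM (Xt p) (Xt q) - ∑ r, attScore Xt Q p r • logitCLM (Xt p) (Xt r))
  have hF : ∀ p i, HasFDerivAt (fun Q => Fout Xt Y Q p i) (∑ q, Y q i • s' p q) Q :=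
    fun p i => HasFDerivAt.fun_sum fun q _ => (hasFDerivAt_attScore Xt Q p q).mul_const (Y q i)
  have hloss : HasFDerivAt (maeLoss M X Xt Y) ((1 / 2 : ℝ) • ∑ p ∈ M, ∑ i,
      (2 * (Fout Xt Y Q p i - X p i)) • ∑ q, Y q i • s' p q) Q := by
    refine HasFDerivAt.const_mul (HasFDerivAt.fun_sum fun p _ => HasFDerivAt.fun_sum
      fun i _ => ?_) (1 / 2)
    simpa using ((hF p i).sub_const (X p i)).pow 2
  rw [hloss.fderiv]
  simp only [one_div, smul_apply, _root_.sum_apply, sub_apply, logitCLM_apply, smul_eq_mul,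
    mul_sum, dotProduct, Pi.sub_apply, Finset.sum_apply, Pi.smul_apply, s']
  exact sum_congr rfl fun _ _ => sum_congr rfl fun _ _ => sum_congr rfl fun _ _ => by ring

lemma fderiv_maeLoss_rankOne (M : Finset (Fin P)) (X Xt Y : Fin P → Fin d → ℝ)
    (Q : Fin d → Fin d → ℝ) (a b : Fin d → ℝ) :
    fderiv ℝ (maeLoss M X Xt Y) Q (fun i j => a i * b j) = ∑ p ∈ M, (Xt p ⬝ᵥ a) *
      ((Fout Xt Y Q p - X p) ⬝ᵥ ∑ q, (attScore Xt Q p q *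
        (b ⬝ᵥ Xt q - ∑ r, attScore Xt Q p r * (b ⬝ᵥ Xt r))) • Y q) := by
  rw [fderiv_maeLoss_apply]
  refine sum_congr rfl fun p _ => ?_
  have hcoeff : ∀ q, attScore Xt Q p q * (logit (Xt p) (fun i j => a i * b j) (Xt q) -
      ∑ r, attScore Xt Q p r * logit (Xt p) (fun i j => a i * b j) (Xt r)) =
      (Xt p ⬝ᵥ a) * (attScore Xt Q p q * (b ⬝ᵥ Xt q - ∑ r, attScore Xt Q p r * (b ⬝ᵥ Xt r))) := by
    intro q
    have hmean : ∑ r, attScore Xt Q p r * ((Xt p ⬝ᵥ a) * (b ⬝ᵥ Xt r)) =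
        (Xt p ⬝ᵥ a) * ∑ r, attScore Xt Q p r * (b ⬝ᵥ Xt r) := by
      rw [mul_sum]
      exact sum_congr rfl fun _ _ => by ring
    simp only [logit_rankOne, hmean]
    ring
  simp only [hcoeff, mul_smul, ← smul_sum, dotProduct_smul, smul_eq_mul]

section Orthonormal

variable {ι m : Type*} [Fintype ι] [Fintype m] {v : ι → m → ℝ}

lemma dotProduct_sum_smul_of_orthonormal (hv_unit : ∀ a, v a ⬝ᵥ v a = 1)
    (hv_orth : ∀ a b, a ≠ b → v a ⬝ᵥ v b = 0) (c : ι → ℝ) (b : ι) :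
    v b ⬝ᵥ ∑ a, c a • v a = c b := by
  rw [dotProduct_sum, sum_eq_single b
    (fun a _ hab => by rw [dotProduct_smul, hv_orth b a hab.symm, smul_zero])
    (fun h => absurd (mem_univ b) h), dotProduct_smul, hv_unit, smul_eq_mul, mul_one]

lemma sum_smul_dotProduct_sum_smul_of_orthonormal (hv_unit : ∀ a, v a ⬝ᵥ v a = 1)
    (hv_orth : ∀ a b, a ≠ b → v a ⬝ᵥ v b = 0) (c c' : ι → ℝ) :
    (∑ a, c a • v a) ⬝ᵥ ∑ a, c' a • v a = ∑ a, c a * c' a := by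
  simp only [sum_dotProduct, smul_dotProduct, dotProduct_sum_smul_of_orthonormal hv_unit hv_orth,
    smul_eq_mul]

end Orthonormal

lemma Fout_eq_sum_smul (Xt Y : Fin P → Fin d → ℝ) (Q : Fin d → Fin d → ℝ) (p : Fin P) :
    Fout Xt Y Q p = ∑ q, attScore Xt Q p q • Y q := by
  ext i
  simp only [Fout, Finset.sum_apply, Pi.smul_apply, smul_eq_mul]

section Sample

variable {area : Fin P → Fin N} {v : Fin N → Fin d → ℝ} {z : Fin N → ℝ} {M : Finset (Fin P)}

lemma Ycol_of_mem {X : Fin P → Fin d → ℝ} {q : Fin P} (hq : q ∈ M) : Ycol M X q = 0 :=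
  funext fun _ => if_pos hq

lemma Ycol_of_notMem {X : Fin P → Fin d → ℝ} {q : Fin P} (hq : q ∉ M) : Ycol M X q = X q :=
  funext fun _ => if_neg hq

lemma Xcol_eq_smul (q : Fin P) : Xcol area v z q = z (area q) • v (area q) :=
  rfl

lemma Ycol_Xcol_dotProduct_eq_zero {w : Fin d → ℝ} (hw : ∀ a, v a ⬝ᵥ w = 0) (q : Fin P) :
    Ycol M (Xcol area v z) q ⬝ᵥ w = 0 := by
  by_cases hq : q ∈ M
  · rw [Ycol_of_mem hq, zero_dotProduct]
  · rw [Ycol_of_notMem hq, Xcol_eq_smul, smul_dotProduct, hw, smul_zero]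

-- Whenever `v n ⬝ᵥ Y q ≠ 0`, the unmasked patch `q` lies in area `n`, so `Y q = z n • v n`.
lemma dotProduct_Ycol_Xcol_smul_self (hv_orth : ∀ a b, a ≠ b → v a ⬝ᵥ v b = 0) (n : Fin N)
    (q : Fin P) :
    (v n ⬝ᵥ Ycol M (Xcol area v z) q) • Ycol M (Xcol area v z) q =
      (v n ⬝ᵥ Ycol M (Xcol area v z) q) • (z n • v n) := by
  by_cases hq : q ∈ M
  · rw [Ycol_of_mem hq, dotProduct_zero, zero_smul, zero_smul]
  rw [Ycol_of_notMem hq, Xcol_eq_smul]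
  by_cases ha : area q = n
  · rw [ha]
  · rw [dotProduct_smul, hv_orth n (area q) (Ne.symm ha), smul_zero, zero_smul, zero_smul]

lemma Fout_Ycol_Xcol (Xt : Fin P → Fin d → ℝ) (Q : Fin d → Fin d → ℝ) (p : Fin P) :
    Fout Xt (Ycol M (Xcol area v z)) Q p = ∑ a, (z a * areaAttn area M Xt Q p a) • v a := by
  have hunmasked : Fout Xt (Ycol M (Xcol area v z)) Q p =
      ∑ q ∈ univ.filter (· ∉ M), attScore Xt Q p q • (z (area q) • v (area q)) := by
    rw [Fout_eq_sum_smul, sum_filter]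
    refine sum_congr rfl fun q _ => ?_
    by_cases hq : q ∈ M
    · rw [Ycol_of_mem hq, smul_zero, if_neg (not_not.mpr hq)]
    · rw [Ycol_of_notMem hq, if_pos hq, Xcol_eq_smul]
  rw [hunmasked, ← sum_fiberwise _ area]
  refine sum_congr rfl fun a _ => ?_
  rw [filter_filter, areaAttn, mul_comm, mul_smul, sum_smul]
  exact sum_congr rfl fun q hq => by rw [(mem_filter.mp hq).2.2]

lemma sum_attScore_shift_smul_Ycol_Xcol (hv_orth : ∀ a b, a ≠ b → v a ⬝ᵥ v b = 0)
    (Xt : Fin P → Fin d → ℝ) (Q : Fin d → Fin d → ℝ) (p : Fin P) (n : Fin N) :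
    ∑ q, (attScore Xt Q p q * (v n ⬝ᵥ Ycol M (Xcol area v z) q -
        ∑ r, attScore Xt Q p r * (v n ⬝ᵥ Ycol M (Xcol area v z) r))) • Ycol M (Xcol area v z) q =
      (v n ⬝ᵥ Fout Xt (Ycol M (Xcol area v z)) Q p) •
        (z n • v n - Fout Xt (Ycol M (Xcol area v z)) Q p) := by
  set Y := Ycol M (Xcol area v z)
  have hmean : ∑ r, attScore Xt Q p r * (v n ⬝ᵥ Y r) = v n ⬝ᵥ Fout Xt Y Q p := by
    simp only [Fout_eq_sum_smul, dotProduct_sum, dotProduct_smul, smul_eq_mul]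
  have hshift : ∀ q, (attScore Xt Q p q * (v n ⬝ᵥ Y q)) • Y q =
      (attScore Xt Q p q * (v n ⬝ᵥ Y q)) • (z n • v n) := fun q => by
    rw [mul_smul, mul_smul, dotProduct_Ycol_Xcol_smul_self hv_orth]
  rw [hmean]
  simp only [mul_sub, sub_smul, sum_sub_distrib, hshift, ← sum_smul, hmean]
  rw [smul_sub, Fout_eq_sum_smul, smul_sum]
  congr 1
  exact sum_congr rfl fun q _ => by rw [mul_comm, mul_smul]

lemma Fout_sub_Xcol_dotProduct_self (hv_unit : ∀ a, v a ⬝ᵥ v a = 1)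
    (hv_orth : ∀ a b, a ≠ b → v a ⬝ᵥ v b = 0) (Xt : Fin P → Fin d → ℝ) (Q : Fin d → Fin d → ℝ)
    (p : Fin P) :
    (Fout Xt (Ycol M (Xcol area v z)) Q p - Xcol area v z p) ⬝ᵥ
        (Fout Xt (Ycol M (Xcol area v z)) Q p - Xcol area v z p) =
      z (area p) ^ 2 * (1 - areaAttn area M Xt Q p (area p)) ^ 2 +
        ∑ a ∈ univ \ {area p}, z a ^ 2 * areaAttn area M Xt Q p a ^ 2 := by
  set A := areaAttn area M Xt Q p
  have hcoord : Fout Xt (Ycol M (Xcol area v z)) Q p - Xcol area v z p =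
      ∑ a, (z a * A a - if a = area p then z (area p) else 0) • v a := by
    simp only [sub_smul, sum_sub_distrib, ite_smul, zero_smul, sum_ite_eq', mem_univ, if_true,
      Fout_Ycol_Xcol, Xcol_eq_smul, A]
  rw [hcoord, sum_smul_dotProduct_sum_smul_of_orthonormal hv_unit hv_orth,
    sum_eq_add_sum_sdiff_singleton_of_mem (mem_univ (area p)), if_pos rfl]
  congr 1
  · ring
  · refine sum_congr rfl fun a ha => ?_
    rw [if_neg (by simpa using ha)]
    ring

lemma XtCol_Ycol_Xcol_dotProduct {e : Fin P → Fin d → ℝ} (he_unit : ∀ p, e p ⬝ᵥ e p = 1)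
    (he_orth : ∀ p q, p ≠ q → e p ⬝ᵥ e q = 0) (hev : ∀ p a, e p ⬝ᵥ v a = 0) (p' p : Fin P) :
    XtCol e (Ycol M (Xcol area v z)) p' ⬝ᵥ e p = if p' = p then 1 else 0 := by
  rw [show XtCol e (Ycol M (Xcol area v z)) p' = Ycol M (Xcol area v z) p' + e p' from rfl,
    add_dotProduct, Ycol_Xcol_dotProduct_eq_zero fun a => by rw [dotProduct_comm, hev], zero_add]
  split_ifs with h
  · rw [h, he_unit]
  · exact he_orth p' p h

end Sample

/-- for a masked patch `p` in area `𝒫_n`,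
`e_pᵀ(−∇_Q ℓ(Q))v_n = A_n(Q)·(z_n³(1−A_n(Q))² + Σ_{a≠n} z_a² z_n A_a(Q)²)`. -/
theorem fp_gradient_same_area (area : Fin P → Fin N) (v : Fin N → Fin d → ℝ)
    (z : Fin N → ℝ) (e : Fin P → Fin d → ℝ)
    (hv_unit : ∀ n, ∑ i, v n i ^ 2 = 1)
    (hv_orth : ∀ n n', n ≠ n' → ∑ i, v n i * v n' i = 0)
    (he_unit : ∀ p, ∑ i, e p i ^ 2 = 1)
    (he_orth : ∀ p q, p ≠ q → ∑ i, e p i * e q i = 0)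
    (hev : ∀ p n, ∑ i, e p i * v n i = 0)
    (M : Finset (Fin P)) (Q : Fin d → Fin d → ℝ)
    (p : Fin P) (hp : p ∈ M) (n : Fin N) (hn : area p = n) :
    (let X := Xcol area v z;
     let Y := Ycol M X;
     let Xt := XtCol e Y;
     let A := areaAttn area M Xt Q p;
     -(fderiv ℝ (maeLoss M X Xt Y) Q (fun i j => e p i * v n j)) =
       A n * (z n ^ 3 * (1 - A n) ^ 2 +
         ∑ a ∈ Finset.univ \ {n}, z a ^ 2 * z n * A a ^ 2)) := by
  intro X Y Xt A
  subst hn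
  have hv_unit' : ∀ a, v a ⬝ᵥ v a = 1 := fun a => by simpa only [dotProduct, sq] using hv_unit a
  have he_unit' : ∀ q, e q ⬝ᵥ e q = 1 := fun q => by simpa only [dotProduct, sq] using he_unit q
  have hev' : ∀ q a, e q ⬝ᵥ v a = 0 := hev
  have hrow : ∀ p', Xt p' ⬝ᵥ e p = if p' = p then 1 else 0 :=
    fun p' => XtCol_Ycol_Xcol_dotProduct he_unit' he_orth hev' p' p
  have hcol : ∀ q, v (area p) ⬝ᵥ Xt q = v (area p) ⬝ᵥ Y q := fun q => by
    rw [show Xt q = Y q + e q from rfl, dotProduct_add, dotProduct_comm (v _) (e q), hev', add_zero]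
  have hshift : ∑ q, (attScore Xt Q p q * (v (area p) ⬝ᵥ Y q -
        ∑ r, attScore Xt Q p r * (v (area p) ⬝ᵥ Y r))) • Y q =
      (v (area p) ⬝ᵥ Fout Xt Y Q p) • (X p - Fout Xt Y Q p) :=
    sum_attScore_shift_smul_Ycol_Xcol hv_orth Xt Q p (area p)
  have hattn : v (area p) ⬝ᵥ Fout Xt Y Q p = z (area p) * A (area p) := by
    rw [Fout_Ycol_Xcol, dotProduct_sum_smul_of_orthonormal hv_unit' hv_orth]
  have herr : (Fout Xt Y Q p - X p) ⬝ᵥ (Fout Xt Y Q p - X p) =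
      z (area p) ^ 2 * (1 - A (area p)) ^ 2 + ∑ a ∈ univ \ {area p}, z a ^ 2 * A a ^ 2 :=
    Fout_sub_Xcol_dotProduct_self hv_unit' hv_orth Xt Q p
  rw [fderiv_maeLoss_rankOne]
  simp only [hrow, hcol, ite_mul, one_mul, zero_mul, sum_ite_eq', if_pos hp]
  rw [hshift, ← neg_sub (Fout Xt Y Q p), dotProduct_smul, dotProduct_neg, smul_eq_mul, herr, hattn]
  simp only [mul_neg, neg_neg, mul_add, mul_sum]
  ring_nf
end
end

section
/- Let S be a hypergeometric random variable Hyper(m, D, M) with 1 ≤ m, D ≤ M, i.e., S counts the number of marked elements when drawing m elements without replacement from a population of size M containing exactly D marked elements. Set μ_M = D/M. Then for every t > 0, P(|S − m·μ_M| > t) ≤ 2·exp( −t² / (4·m·μ_M + 2t) ). -/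
/-!
Chernoff's method. The factorial moments of `S ~ Hyper(m, D, M)` are
`E[C(S, k)] = C(m, k) · C(D, k) / C(M, k) ≤ C(m, k) (D/M)^k`, which are those of `Bin(m, D/M)`
bounded termwise; expanding `x^S = ∑ₖ C(S, k) (x - 1)^k` gives the binomial generating function
bound `E[x^S] ≤ (1 + μ (x - 1))^m` for `x ≥ 1`, and the case `0 < x ≤ 1` follows by applying it
to `m - S ~ Hyper(m, M - D, M)` at `1/x`. With `e^λ - 1 ≤ λ + λ²` for `|λ| ≤ 1` this yields
`E[exp(λ(S - mμ))] ≤ exp(mμλ²)`, and Markov's inequality at `λ = t / (2mμ + t)` finishes.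
-/

open Finset Real

noncomputable def hypergeomProb (m D M s : ℕ) : ℝ :=
  (D.choose s * (M - D).choose (m - s) : ℝ) / M.choose m

lemma hypergeomProb_nonneg (m D M s : ℕ) : 0 ≤ hypergeomProb m D M s := by
  unfold hypergeomProb; positivity

lemma hypergeomProb_sub_sub {m D M s : ℕ} (hDM : D ≤ M) (hs : s ≤ m) :
    hypergeomProb m (M - D) M (m - s) = hypergeomProb m D M s := by
  simp only [hypergeomProb, Nat.sub_sub_self hDM, Nat.sub_sub_self hs, mul_comm]

lemma Nat.descFactorial_mul_pow_le {D M : ℕ} (hDM : D ≤ M) (k : ℕ) :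
    D.descFactorial k * M ^ k ≤ M.descFactorial k * D ^ k := by
  induction k with
  | zero => simp
  | succ k ih =>
    have key : (D - k) * M ≤ (M - k) * D := by
      rw [Nat.sub_mul, Nat.sub_mul, Nat.mul_comm D M]
      exact Nat.sub_le_sub_left (Nat.mul_le_mul_left k hDM) _
    calc D.descFactorial (k + 1) * M ^ (k + 1)
        = D.descFactorial k * M ^ k * ((D - k) * M) := by rw [descFactorial_succ]; ring
      _ ≤ M.descFactorial k * D ^ k * ((M - k) * D) := Nat.mul_le_mul ih key
      _ = M.descFactorial (k + 1) * D ^ (k + 1) := by rw [descFactorial_succ]; ring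

lemma Nat.choose_mul_pow_le {D M : ℕ} (hDM : D ≤ M) (k : ℕ) :
    D.choose k * M ^ k ≤ M.choose k * D ^ k := by
  have := descFactorial_mul_pow_le hDM k
  rw [descFactorial_eq_factorial_mul_choose, descFactorial_eq_factorial_mul_choose,
    Nat.mul_assoc, Nat.mul_assoc] at this
  exact Nat.le_of_mul_le_mul_left this k.factorial_pos

/-- The `k`-th factorial moment of the hypergeometric distribution, times `C(M, m)`. -/
lemma Nat.sum_choose_mul_choose_mul_choose {m D M k : ℕ} (hk : k ≤ m) (hDM : D ≤ M) :
    ∑ s ∈ range (m + 1), D.choose s * (M - D).choose (m - s) * s.choose k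
      = D.choose k * (M - k).choose (m - k) := by
  have hterm : ∀ j, D.choose (k + j) * (M - D).choose (m - (k + j)) * (k + j).choose k
      = D.choose k * ((D - k).choose j * (M - D).choose (m - k - j)) := by
    intro j
    have := choose_mul (n := D) (Nat.le_add_right k j)
    rw [Nat.add_sub_cancel_left] at this
    rw [Nat.sub_add_eq, mul_right_comm, this, mul_assoc]
  rw [show m + 1 = k + (m - k + 1) by omega, sum_range_add,
    sum_eq_zero fun s hs => by simp [choose_eq_zero_of_lt (mem_range.1 hs)], zero_add]
  simp only [hterm, ← mul_sum]
  rw [← Finset.Nat.sum_antidiagonal_eq_sum_range_succ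
    (fun i j => (D - k).choose i * (M - D).choose j), ← add_choose_eq]
  rcases le_or_gt k D with hkD | hDk
  · rw [show D - k + (M - D) = M - k by omega]
  · simp [choose_eq_zero_of_lt hDk]

lemma sum_hypergeomProb_mul_choose_le {m D M k : ℕ} (hDM : D ≤ M) (hM : 0 < M) (hk : k ≤ m) :
    ∑ s ∈ range (m + 1), hypergeomProb m D M s * s.choose k
      ≤ m.choose k * ((D : ℝ) / M) ^ k := by
  rcases lt_or_ge M m with hMm | hmM
  · simp only [hypergeomProb, Nat.choose_eq_zero_of_lt hMm, Nat.cast_zero, div_zero, zero_mul,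
      sum_const_zero]
    positivity
  have hmoment : ∑ s ∈ range (m + 1), hypergeomProb m D M s * s.choose k
      = (D.choose k * (M - k).choose (m - k) : ℕ) / (M.choose m : ℝ) := by
    rw [← Nat.sum_choose_mul_choose_mul_choose hk hDM, Nat.cast_sum, sum_div]
    refine sum_congr rfl fun s _ => ?_
    simp only [hypergeomProb, Nat.cast_mul]
    ring
  have hnat : D.choose k * (M - k).choose (m - k) * M ^ k ≤ m.choose k * D ^ k * M.choose m :=
    calc D.choose k * (M - k).choose (m - k) * M ^ k
        = D.choose k * M ^ k * (M - k).choose (m - k) := by ring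
      _ ≤ M.choose k * D ^ k * (M - k).choose (m - k) :=
        Nat.mul_le_mul_right _ (Nat.choose_mul_pow_le hDM k)
      _ = M.choose k * (M - k).choose (m - k) * D ^ k := by ring
      _ = m.choose k * D ^ k * M.choose m := by rw [← Nat.choose_mul hk]; ring
  have hCm : (0 : ℝ) < M.choose m := by exact_mod_cast Nat.choose_pos hmM
  rw [hmoment, div_pow, ← mul_div_assoc, div_le_div_iff₀ hCm (by positivity)]
  exact_mod_cast hnat

lemma add_one_pow_eq_sum_range {R : Type*} [CommSemiring R] (y : R) {s n : ℕ} (hs : s ≤ n) :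
    (y + 1) ^ s = ∑ k ∈ range (n + 1), y ^ k * s.choose k := by
  rw [add_pow]
  simp only [one_pow, mul_one]
  refine sum_subset (range_subset_range.2 (by omega)) fun k _ hk => ?_
  rw [Nat.choose_eq_zero_of_lt (by simpa using hk), Nat.cast_zero, mul_zero]

lemma sum_hypergeomProb_mul_pow_le_of_one_le {m D M : ℕ} (hDM : D ≤ M) (hM : 0 < M) {x : ℝ}
    (hx : 1 ≤ x) :
    ∑ s ∈ range (m + 1), hypergeomProb m D M s * x ^ s ≤ (1 + D / M * (x - 1)) ^ m :=
  calc ∑ s ∈ range (m + 1), hypergeomProb m D M s * x ^ s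
      = ∑ k ∈ range (m + 1), (x - 1) ^ k * ∑ s ∈ range (m + 1),
          hypergeomProb m D M s * s.choose k := by
        simp only [mul_sum]
        rw [sum_comm]
        refine sum_congr rfl fun s hs => ?_
        rw [← sub_add_cancel x 1, add_one_pow_eq_sum_range _ (mem_range_succ_iff.1 hs), mul_sum,
          add_sub_cancel_right]
        exact sum_congr rfl fun k _ => by ring
    _ ≤ ∑ k ∈ range (m + 1), (x - 1) ^ k * (m.choose k * ((D : ℝ) / M) ^ k) := by
        refine sum_le_sum fun k hk => mul_le_mul_of_nonneg_left ?_ (pow_nonneg (by linarith) k)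
        exact sum_hypergeomProb_mul_choose_le hDM hM (mem_range_succ_iff.1 hk)
    _ = (1 + D / M * (x - 1)) ^ m := by
        rw [add_comm 1, add_one_pow_eq_sum_range _ le_rfl]
        exact sum_congr rfl fun k _ => by rw [mul_pow]; ring

lemma sum_hypergeomProb_mul_pow_le {m D M : ℕ} (hDM : D ≤ M) (hM : 0 < M) {x : ℝ} (hx : 0 < x) :
    ∑ s ∈ range (m + 1), hypergeomProb m D M s * x ^ s ≤ (1 + D / M * (x - 1)) ^ m := by
  rcases le_total 1 x with hx1 | hx1
  · exact sum_hypergeomProb_mul_pow_le_of_one_le hDM hM hx1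
  -- `m - S` is hypergeometric with `M - D` marked elements, and `x ^ S = x ^ m * (x⁻¹) ^ (m - S)`
  have hreflect : ∑ s ∈ range (m + 1), hypergeomProb m D M s * x ^ s
      = x ^ m * ∑ s ∈ range (m + 1), hypergeomProb m (M - D) M s * x⁻¹ ^ s := by
    rw [← sum_range_reflect, mul_sum]
    refine sum_congr rfl fun s hs => ?_
    have hs : s ≤ m := mem_range_succ_iff.1 hs
    rw [add_tsub_cancel_right, ← hypergeomProb_sub_sub hDM (Nat.sub_le m s),
      Nat.sub_sub_self hs, pow_sub₀ x hx.ne' hs, inv_pow]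
    ring
  have hMD : ((M - D : ℕ) : ℝ) / M = 1 - D / M := by
    rw [Nat.cast_sub hDM, sub_div, div_self (by positivity)]
  calc ∑ s ∈ range (m + 1), hypergeomProb m D M s * x ^ s
      ≤ x ^ m * (1 + ((M - D : ℕ) : ℝ) / M * (x⁻¹ - 1)) ^ m := by
        rw [hreflect]
        gcongr
        exact sum_hypergeomProb_mul_pow_le_of_one_le (Nat.sub_le M D) hM (one_le_inv₀ hx |>.2 hx1)
    _ = (1 + D / M * (x - 1)) ^ m := by
        rw [← mul_pow, hMD]
        congr 1
        field_simp
        ring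

lemma sum_hypergeomProb_mul_exp_le {m D M : ℕ} (hDM : D ≤ M) (hM : 0 < M) {l : ℝ}
    (hl : |l| ≤ 1) :
    ∑ s ∈ range (m + 1), hypergeomProb m D M s * exp (l * (s - m * (D / M)))
      ≤ exp (m * (D / M) * l ^ 2) := by
  set μ : ℝ := D / M
  have hμ0 : 0 ≤ μ := by positivity
  have hμ1 : μ ≤ 1 := div_le_one_of_le₀ (by exact_mod_cast hDM) (by positivity)
  have hexp : exp l - 1 ≤ l + l ^ 2 := by
    linarith [le_abs_self (exp l - 1 - l), abs_exp_sub_one_sub_id_le hl]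
  calc ∑ s ∈ range (m + 1), hypergeomProb m D M s * exp (l * (s - m * μ))
      = exp (-(l * (m * μ))) * ∑ s ∈ range (m + 1), hypergeomProb m D M s * exp l ^ s := by
        rw [mul_sum]
        refine sum_congr rfl fun s _ => ?_
        rw [← exp_nat_mul, mul_left_comm, ← exp_add]
        congr 2
        ring
    _ ≤ exp (-(l * (m * μ))) * (1 + μ * (exp l - 1)) ^ m := by
        gcongr
        exact sum_hypergeomProb_mul_pow_le hDM hM (exp_pos l)
    _ ≤ exp (-(l * (m * μ))) * exp (μ * (exp l - 1)) ^ m := by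
        gcongr
        · nlinarith [exp_pos l]
        · linarith [add_one_le_exp (μ * (exp l - 1))]
    _ ≤ exp (-(l * (m * μ))) * exp (μ * (l + l ^ 2)) ^ m := by gcongr
    _ = exp (m * μ * l ^ 2) := by
        rw [← exp_nat_mul, ← exp_add]
        ring_nf

lemma sum_ite_lt_abs_le {ι : Type*} (S : Finset ι) {p f : ι → ℝ} (hp : ∀ i ∈ S, 0 ≤ p i)
    {t l : ℝ} (hl : 0 ≤ l) :
    (∑ i ∈ S, if t < |f i| then p i else 0)
      ≤ exp (-(l * t)) * (∑ i ∈ S, p i * exp (l * f i) + ∑ i ∈ S, p i * exp (-l * f i)) := by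
  rw [← sum_add_distrib, mul_sum]
  refine sum_le_sum fun i hi => ?_
  have hpi := hp i hi
  split_ifs with h
  · have hlt : l * t ≤ |l * f i| := by
      rw [abs_mul, abs_of_nonneg hl]
      exact mul_le_mul_of_nonneg_left h.le hl
    calc p i = p i * (exp (-(l * t)) * exp (l * t)) := by
          rw [← exp_add, neg_add_cancel, exp_zero, mul_one]
      _ ≤ p i * (exp (-(l * t)) * (exp (l * f i) + exp (-(l * f i)))) := by
          gcongr
          exact (exp_le_exp.2 hlt).trans (exp_abs_le _)
      _ = exp (-(l * t)) * (p i * exp (l * f i) + p i * exp (-l * f i)) := by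
          rw [neg_mul]
          ring
  · positivity

lemma mul_div_sq_sub_div_mul_le {a t : ℝ} (ha : 0 ≤ a) (ht : 0 < t) :
    a * (t / (2 * a + t)) ^ 2 - t / (2 * a + t) * t ≤ -t ^ 2 / (4 * a + 2 * t) := by
  have h : 0 < 2 * a + t := by linarith
  rw [div_pow, le_div_iff₀ (by linarith)]
  field_simp
  nlinarith [mul_pos (mul_pos ht ht) h]

theorem hypergeometric_tail_bound_general (m D M : ℕ)
    (hD : 1 ≤ D) (hDM : D ≤ M)
    (t : ℝ) (ht : 0 < t) :
    (∑ s ∈ Finset.range (m + 1),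
        if t < |(s : ℝ) - m * ((D : ℝ) / M)| then
          (Nat.choose D s * Nat.choose (M - D) (m - s) : ℝ) / Nat.choose M m
        else 0) ≤
      2 * Real.exp (-t ^ 2 / (4 * m * ((D : ℝ) / M) + 2 * t)) := by
  have hM : 0 < M := by omega
  set a : ℝ := m * ((D : ℝ) / M)
  have ha : 0 ≤ a := by positivity
  set l := t / (2 * a + t)
  have hl : 0 ≤ l := by positivity
  have hl1 : |l| ≤ 1 := by
    rw [abs_of_nonneg hl, div_le_one (by positivity)]
    linarith
  calc (∑ s ∈ range (m + 1), if t < |(s : ℝ) - a| then hypergeomProb m D M s else 0)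
      ≤ exp (-(l * t)) * (∑ s ∈ range (m + 1), hypergeomProb m D M s * exp (l * (s - a))
          + ∑ s ∈ range (m + 1), hypergeomProb m D M s * exp (-l * (s - a))) :=
        sum_ite_lt_abs_le _ (fun s _ => hypergeomProb_nonneg m D M s) hl
    _ ≤ exp (-(l * t)) * (exp (a * l ^ 2) + exp (a * (-l) ^ 2)) := by
        gcongr
        · exact sum_hypergeomProb_mul_exp_le hDM hM hl1
        · exact sum_hypergeomProb_mul_exp_le hDM hM (by rwa [abs_neg])
    _ = 2 * exp (a * l ^ 2 - l * t) := by
        rw [neg_sq, ← two_mul, mul_left_comm, ← exp_add]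
        ring_nf
    _ ≤ 2 * exp (-t ^ 2 / (4 * m * ((D : ℝ) / M) + 2 * t)) := by
        rw [mul_assoc 4]
        gcongr
        exact mul_div_sq_sub_div_mul_le ha ht

theorem hypergeometric_tail_bound (m D M : ℕ)
    (hm : 1 ≤ m) (hD : 1 ≤ D) (hmM : m ≤ M) (hDM : D ≤ M)
    (t : ℝ) (ht : 0 < t) :
    (∑ s ∈ Finset.range (m + 1),
        if t < |(s : ℝ) - m * ((D : ℝ) / M)| then
          (Nat.choose D s * Nat.choose (M - D) (m - s) : ℝ) / Nat.choose M m
        else 0) ≤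
      2 * Real.exp (-t ^ 2 / (4 * m * ((D : ℝ) / M) + 2 * t)) :=
  hypergeometric_tail_bound_general m D M hD hDM t ht
end
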